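/- arXiv:2305.08742 — 2 statements merged into one kernel-verified Lean document; each statement's English description precedes it below -/
import Mathlib

section
/- With the coarse truncated approximation Q of H_r one has (σ_N/σ_{p+1}) · λ̃² ≤ λ̂² ≤ λ̃² ≤ λ², i.e., √(σ_N/σ_{p+1}) · λ̃ ≤ λ̂ ≤ λ̃ ≤ λ. -/
/-!
In an orthonormal eigenbasis `u` shared by `H_r = PᵀHP` and `Q`, with `cᵢ = uᵢ ⬝ Pᵀg`, one has
`λ̃² = ∑ cᵢ² / σᵢ` and `λ̂² = ∑ cᵢ² / τᵢ`, where `τ` is the truncated spectrum. The first two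
inequalities are then termwise: `σᵢ ≤ τᵢ` and `(σ_N / σ_{p+1}) τᵢ ≤ σᵢ`. For the last one put
`x = P H_r⁻¹ Pᵀ g` and `h = H⁻¹ g`; then `0 ≤ (x - h) ⬝ H (x - h) = λ² - λ̃²`.
-/

open Matrix

namespace Matrix

section Eigenbasis

variable {ι : Type*} [Fintype ι] [DecidableEq ι] {u : ι → ι → ℝ}

theorem of_mul_transpose_eq_one_of_orthonormal
    (hu : ∀ i j, u i ⬝ᵥ u j = if i = j then 1 else 0) : of u * (of u)ᵀ = 1 := by
  ext i j
  simpa [mul_apply, dotProduct, one_apply] using hu i j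

theorem mul_transpose_of_eq_transpose_mul_diagonal {M : Matrix ι ι ℝ} {d : ι → ℝ}
    (h : ∀ i, M *ᵥ u i = d i • u i) : M * (of u)ᵀ = (of u)ᵀ * diagonal d := by
  ext i j
  rw [mul_diagonal]
  simpa [mul_apply, mulVec, dotProduct, mul_comm] using congrFun (h j) i

theorem inv_eq_of_orthonormal_eigenvectors {M : Matrix ι ι ℝ} {d : ι → ℝ}
    (hu : ∀ i j, u i ⬝ᵥ u j = if i = j then 1 else 0) (h : ∀ i, M *ᵥ u i = d i • u i)
    (hd : ∀ i, d i ≠ 0) : M⁻¹ = (of u)ᵀ * diagonal d⁻¹ * of u := by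
  refine inv_eq_right_inv ?_
  calc M * ((of u)ᵀ * diagonal d⁻¹ * of u)
      = (of u)ᵀ * (diagonal d * diagonal d⁻¹) * of u := by
        simp only [← Matrix.mul_assoc, mul_transpose_of_eq_transpose_mul_diagonal h]
    _ = 1 := by
        rw [diagonal_mul_diagonal, show (fun i ↦ d i * d⁻¹ i) = fun _ ↦ 1 from
          funext fun i ↦ mul_inv_cancel₀ (hd i), diagonal_one, Matrix.mul_one,
          mul_eq_one_comm.mp (of_mul_transpose_eq_one_of_orthonormal hu)]

theorem dotProduct_inv_mulVec_eq_sum_of_orthonormal_eigenvectors {M : Matrix ι ι ℝ}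
    {d : ι → ℝ} (hu : ∀ i j, u i ⬝ᵥ u j = if i = j then 1 else 0)
    (h : ∀ i, M *ᵥ u i = d i • u i) (hd : ∀ i, d i ≠ 0) (v : ι → ℝ) :
    v ⬝ᵥ (M⁻¹ *ᵥ v) = ∑ i, (u i ⬝ᵥ v) ^ 2 / d i := by
  rw [inv_eq_of_orthonormal_eigenvectors hu h hd, ← mulVec_mulVec, ← mulVec_mulVec,
    dotProduct_mulVec, vecMul_transpose]
  simp only [dotProduct, mulVec_diagonal, Pi.inv_apply]
  exact Finset.sum_congr rfl fun i _ ↦ by simp only [mulVec, of_apply, dotProduct]; ring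

end Eigenbasis

theorem mulVec_dotProduct {m k R : Type*} [Fintype m] [Fintype k] [CommSemiring R]
    (A : Matrix m k R) (x : k → R) (w : m → R) : (A *ᵥ x) ⬝ᵥ w = x ⬝ᵥ (Aᵀ *ᵥ w) := by
  rw [dotProduct_comm, dotProduct_mulVec, ← mulVec_transpose, dotProduct_comm]

theorem PosDef.dotProduct_inv_compression_mulVec_le {m k : Type*} [Fintype m] [Fintype k]
    [DecidableEq m] [DecidableEq k] {H : Matrix m m ℝ} (hH : H.PosDef) (P : Matrix m k ℝ)
    (g : m → ℝ) : (Pᵀ *ᵥ g) ⬝ᵥ ((Pᵀ * H * P)⁻¹ *ᵥ (Pᵀ *ᵥ g)) ≤ g ⬝ᵥ (H⁻¹ *ᵥ g) := by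
  by_cases hHr : IsUnit (Pᵀ * H * P).det
  swap
  · rw [nonsing_inv_apply_not_isUnit _ hHr, zero_mulVec, dotProduct_zero]
    simpa using hH.inv.posSemidef.dotProduct_mulVec_nonneg g
  set y := (Pᵀ * H * P)⁻¹ *ᵥ (Pᵀ *ᵥ g)
  set h := H⁻¹ *ᵥ g
  have hHh : H *ᵥ h = g := by
    rw [mulVec_mulVec, mul_nonsing_inv _ ((isUnit_iff_isUnit_det H).mp hH.isUnit), one_mulVec]
  have hHt : Hᵀ = H := (conjTranspose_eq_transpose_of_trivial H).symm.trans hH.isHermitian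
  have hxg : (P *ᵥ y) ⬝ᵥ g = y ⬝ᵥ (Pᵀ *ᵥ g) := mulVec_dotProduct P y g
  have hxHx : (P *ᵥ y) ⬝ᵥ (H *ᵥ (P *ᵥ y)) = y ⬝ᵥ (Pᵀ *ᵥ g) := by
    rw [mulVec_dotProduct, mulVec_mulVec, mulVec_mulVec, mulVec_mulVec, mul_nonsing_inv _ hHr,
      one_mulVec]
  have hhHx : h ⬝ᵥ (H *ᵥ (P *ᵥ y)) = y ⬝ᵥ (Pᵀ *ᵥ g) := by
    rw [dotProduct_comm, mulVec_dotProduct, hHt, hHh, hxg]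
  have hnonneg := hH.posSemidef.dotProduct_mulVec_nonneg (P *ᵥ y - h)
  rw [star_trivial, mulVec_sub, hHh] at hnonneg
  simp only [sub_dotProduct, dotProduct_sub, hxHx, hxg, hhHx] at hnonneg
  rw [dotProduct_comm (Pᵀ *ᵥ g), dotProduct_comm g]
  linarith

end Matrix

theorem mul_sum_sq_div_le_sum_sq_div {ι : Type*} [Fintype ι] {κ : ℝ} {d e : ι → ℝ}
    (hd : ∀ i, 0 < d i) (he : ∀ i, 0 < e i) (h : ∀ i, κ * e i ≤ d i) (c : ι → ℝ) :
    κ * ∑ i, c i ^ 2 / d i ≤ ∑ i, c i ^ 2 / e i := by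
  rw [Finset.mul_sum]
  refine Finset.sum_le_sum fun i _ ↦ ?_
  rw [mul_div_left_comm, div_eq_mul_one_div (c i ^ 2)]
  refine mul_le_mul_of_nonneg_left ?_ (sq_nonneg _)
  rw [div_le_div_iff₀ (hd i) (he i), one_mul]
  exact h i

section TruncatedSpectrum

variable {N p : ℕ} (σ : Fin N → ℝ) (hpN : p < N)

def truncatedSpectrum (i : Fin N) : ℝ := if (i : ℕ) < p then σ i else σ ⟨p, hpN⟩

variable {σ}

theorem truncatedSpectrum_pos (hσ : ∀ i, 0 < σ i) (i : Fin N) :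
    0 < truncatedSpectrum σ hpN i := by
  unfold truncatedSpectrum
  split_ifs <;> exact hσ _

theorem le_truncatedSpectrum (hσ : Antitone σ) (i : Fin N) : σ i ≤ truncatedSpectrum σ hpN i := by
  unfold truncatedSpectrum
  split_ifs with hi
  · exact le_rfl
  · exact hσ (Fin.le_def.mpr (not_lt.mp hi))

theorem div_mul_truncatedSpectrum_le (hσ : ∀ i, 0 < σ i) {j : Fin N} (hj : ∀ i, σ j ≤ σ i)
    (i : Fin N) : σ j / σ ⟨p, hpN⟩ * truncatedSpectrum σ hpN i ≤ σ i := by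
  have hp := hσ ⟨p, hpN⟩
  unfold truncatedSpectrum
  split_ifs
  · exact mul_le_of_le_one_left (hσ i).le ((div_le_one hp).mpr (hj _))
  · rw [div_mul_cancel₀ _ hp.ne']
    exact hj i

end TruncatedSpectrum

/-- With the coarse truncated approximation `Q` of
`H_r := Pᵀ H P` one has `(σ_N/σ_{p+1}) · λ̃² ≤ λ̂² ≤ λ̃² ≤ λ²`, i.e.
`√(σ_N/σ_{p+1}) · λ̃ ≤ λ̂ ≤ λ̃ ≤ λ`, where
`λ² = gᵀ H⁻¹ g`, `λ̃² = gᵀ P H_r⁻¹ Pᵀ g`, `λ̂² = gᵀ P Q⁻¹ Pᵀ g`.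
(`H_r` has eigenvalues `σ_1 ≥ … ≥ σ_N > 0` with orthonormal eigenvectors `u_i`;
`Q` keeps `σ_1, …, σ_p` and replaces the rest by `σ_{p+1}`; indices 0-based.) -/
theorem stmt5 {n N p : ℕ} (hpN : p < N)
    (H : Matrix (Fin n) (Fin n) ℝ) (hH : H.PosDef)
    (P : Matrix (Fin n) (Fin N) ℝ)
    (σ : Fin N → ℝ) (u : Fin N → Fin N → ℝ)
    (hσpos : ∀ i, 0 < σ i)
    (hσmono : ∀ i j : Fin N, i ≤ j → σ j ≤ σ i)
    (hortho : ∀ i j : Fin N, u i ⬝ᵥ u j = if i = j then (1 : ℝ) else 0)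
    (hHreig : ∀ i, (Pᵀ * H * P) *ᵥ u i = σ i • u i)
    (Q : Matrix (Fin N) (Fin N) ℝ)
    (hQeig : ∀ i : Fin N, Q *ᵥ u i = (if (i : ℕ) < p then σ i else σ ⟨p, hpN⟩) • u i)
    (g : Fin n → ℝ) :
    σ ⟨N - 1, by omega⟩ / σ ⟨p, hpN⟩ * ((Pᵀ *ᵥ g) ⬝ᵥ ((Pᵀ * H * P)⁻¹ *ᵥ (Pᵀ *ᵥ g)))
        ≤ (Pᵀ *ᵥ g) ⬝ᵥ (Q⁻¹ *ᵥ (Pᵀ *ᵥ g)) ∧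
    (Pᵀ *ᵥ g) ⬝ᵥ (Q⁻¹ *ᵥ (Pᵀ *ᵥ g)) ≤ (Pᵀ *ᵥ g) ⬝ᵥ ((Pᵀ * H * P)⁻¹ *ᵥ (Pᵀ *ᵥ g)) ∧
    (Pᵀ *ᵥ g) ⬝ᵥ ((Pᵀ * H * P)⁻¹ *ᵥ (Pᵀ *ᵥ g)) ≤ g ⬝ᵥ (H⁻¹ *ᵥ g) := by
  have hτpos := truncatedSpectrum_pos hpN hσpos
  have hHr := dotProduct_inv_mulVec_eq_sum_of_orthonormal_eigenvectors hortho hHreig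
    (fun i ↦ (hσpos i).ne') (Pᵀ *ᵥ g)
  have hQ := dotProduct_inv_mulVec_eq_sum_of_orthonormal_eigenvectors
    (d := truncatedSpectrum σ hpN) hortho hQeig (fun i ↦ (hτpos i).ne') (Pᵀ *ᵥ g)
  refine ⟨?_, ?_, hH.dotProduct_inv_compression_mulVec_le P g⟩
  · rw [hHr, hQ]
    exact mul_sum_sq_div_le_sum_sq_div hσpos hτpos
      (div_mul_truncatedSpectrum_le hpN hσpos fun i ↦ hσmono i _ (Nat.le_sub_one_of_lt i.isLt)) _
  · rw [hHr, hQ]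
    simpa only [one_mul] using mul_sum_sq_div_le_sum_sq_div hτpos hσpos
      (fun i ↦ (one_mul _).trans_le (le_truncatedSpectrum hpN hσmono i)) _
end

section
/- Let f be a strictly convex standard self-concordant function on ℝⁿ and x a point with ∇f(x) ≠ 0. Let Q be the truncated approximation of A := ∇²f(x) with parameter N, let λ̄ := (∇f(x)ᵀ Q⁻¹ ∇f(x))^{1/2} and d̂ := −Q⁻¹ ∇f(x), and set t* := 1/(1 + λ̄). Then f(x + t* d̂) ≤ f(x) − λ̄²/(2(1 + λ̄)); in particular, for any α ∈ (0, 1/2], the Armijo condition f(x + t* d̂) ≤ f(x) + α t* ∇f(x)ᵀ d̂ holds. -/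
/-! Along the line `t ↦ x + t d̂` the function `φ t = f (x + t d̂)` is self-concordant, so
`(φ'')^{-1/2}` is `1`-Lipschitz and `φ'' t ≤ b² / (1 - b t)²` with `b² = φ'' 0`. Integrating twice,
`φ t ≤ φ 0 + t φ' 0 + ω (b t)` with `ω s = -s - log (1 - s)`, which is increasing on `[0, 1)`.
Here `φ' 0 = -λ̄²`, and `b ≤ λ̄` because `Q` dominates `∇²f(x)` in the Loewner order, so at
`t = 1 / (1 + λ̄)` we get `φ t ≤ φ 0 - λ̄ + log (1 + λ̄)`; finally
`log y ≤ sinh (log y) = (y - y⁻¹) / 2` for `y ≥ 1`. -/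

open Matrix Set Real

theorem image_le_of_hasDerivAt_le_hasDerivAt {f f' B B' : ℝ → ℝ} {a b : ℝ}
    (hf : ∀ x ∈ Icc a b, HasDerivAt f (f' x) x) (hB : ∀ x ∈ Icc a b, HasDerivAt B (B' x) x)
    (ha : f a ≤ B a) (bound : ∀ x ∈ Ico a b, f' x ≤ B' x) : ∀ ⦃x⦄, x ∈ Icc a b → f x ≤ B x :=
  image_le_of_deriv_right_le_deriv_boundary
    (fun x hx => (hf x hx).continuousAt.continuousWithinAt)
    (fun x hx => (hf x (Ico_subset_Icc_self hx)).hasDerivWithinAt) ha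
    (fun x hx => (hB x hx).continuousAt.continuousWithinAt)
    (fun x hx => (hB x (Ico_subset_Icc_self hx)).hasDerivWithinAt) bound

namespace Real

theorem neg_sub_log_one_sub_le {a b : ℝ} (ha : 0 ≤ a) (hab : a ≤ b) (hb : b < 1) :
    -a - log (1 - a) ≤ -b - log (1 - b) := by
  have h1a : 0 < 1 - a := by linarith
  have hlog : log ((1 - b) / (1 - a)) ≤ (1 - b) / (1 - a) - 1 :=
    log_le_sub_one_of_pos (div_pos (by linarith) h1a)
  rw [log_div (by linarith) h1a.ne'] at hlog
  have : (1 - b) / (1 - a) - 1 ≤ a - b := by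
    rw [div_sub_one h1a.ne', div_le_iff₀ h1a]
    nlinarith
  linarith

theorem log_le_sub_inv_div_two {y : ℝ} (hy : 1 ≤ y) : log y ≤ (y - y⁻¹) / 2 := by
  rw [← sinh_log (by linarith)]
  exact self_le_sinh_iff.mpr (log_nonneg hy)

theorem log_one_add_le {x : ℝ} (hx : 0 ≤ x) : log (1 + x) ≤ x - x ^ 2 / (2 * (1 + x)) := by
  have h := log_le_sub_inv_div_two (by linarith : 1 ≤ 1 + x)
  have : ((1 + x) - (1 + x)⁻¹) / 2 = x - x ^ 2 / (2 * (1 + x)) := by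
    field_simp
    ring
  linarith

end Real

theorem le_div_one_sub_mul_sq_of_selfConcordant {ψ : ℝ → ℝ} (hψ : Differentiable ℝ ψ)
    (hpos : ∀ t, 0 < ψ t) (hsc : ∀ t, deriv ψ t ≤ 2 * ψ t ^ ((3 : ℝ) / 2))
    {t : ℝ} (ht : 0 ≤ t) (hbt : √(ψ 0) * t < 1) :
    ψ t ≤ ψ 0 / (1 - √(ψ 0) * t) ^ 2 := by
  have hsqrt : ∀ s, 0 < √(ψ s) := fun s => sqrt_pos.mpr (hpos s)
  have hχ : ∀ s, HasDerivAt (fun s => (√(ψ s))⁻¹)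
      (-(deriv ψ s / (2 * √(ψ s))) / √(ψ s) ^ 2) s := fun s =>
    ((hψ s).hasDerivAt.sqrt (hpos s).ne').inv (hsqrt s).ne'
  have hχ' : ∀ s, -1 ≤ -(deriv ψ s / (2 * √(ψ s))) / √(ψ s) ^ 2 := by
    intro s
    have h32 : ψ s ^ ((3 : ℝ) / 2) = √(ψ s) ^ 2 * √(ψ s) := by
      rw [sq_sqrt (hpos s).le, sqrt_eq_rpow, ← rpow_one_add' (hpos s).le (by norm_num)]
      norm_num
    have hbound := hsc s
    rw [h32] at hbound
    have hs := hsqrt s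
    rw [neg_div, neg_le_neg_iff, div_div, div_le_one (by positivity)]
    linarith
  have hlin := image_le_of_hasDerivAt_le_hasDerivAt (a := 0) (b := t)
    (f := fun s => (√(ψ 0))⁻¹ - s) (fun s _ => (hasDerivAt_id s).const_sub _)
    (fun s _ => hχ s) (by simp) (fun s _ => hχ' s) ⟨ht, le_rfl⟩
  set c := √(ψ 0)
  have hc : 0 < c := hsqrt 0
  have hs := hsqrt t
  have hroot : √(ψ t) * (1 - c * t) ≤ c :=
    calc √(ψ t) * (1 - c * t) = c * √(ψ t) * (c⁻¹ - t) := by field_simp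
      _ ≤ c * √(ψ t) * (√(ψ t))⁻¹ := mul_le_mul_of_nonneg_left hlin (by positivity)
      _ = c := by field_simp
  rw [le_div_iff₀ (by nlinarith), ← sq_sqrt (hpos t).le, ← sq_sqrt (hpos 0).le, ← mul_pow]
  exact pow_le_pow_left₀ (by nlinarith) hroot 2

theorem le_add_mul_deriv_sub_log_of_iteratedDeriv_two_le {φ : ℝ → ℝ} (hφ : ContDiff ℝ 2 φ)
    {b T : ℝ} (hb : 0 ≤ b) (hT : 0 ≤ T) (hbT : b * T < 1)
    (hbound : ∀ t ∈ Icc 0 T, iteratedDeriv 2 φ t ≤ b ^ 2 / (1 - b * t) ^ 2) :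
    φ T ≤ φ 0 + T * deriv φ 0 - b * T - log (1 - b * T) := by
  have hgap : ∀ t ∈ Icc 0 T, 1 - b * t ≠ 0 := fun t ht => by
    nlinarith [mul_le_mul_of_nonneg_left ht.2 hb]
  have hline : ∀ t, HasDerivAt (fun t => 1 - b * t) (-b) t := fun t => by
    simpa using ((hasDerivAt_id t).const_mul b).const_sub 1
  have hφ1 : ∀ t, HasDerivAt φ (deriv φ t) t := fun t =>
    (hφ.differentiable (by norm_num) t).hasDerivAt
  have hφ' : Differentiable ℝ (deriv φ) := by
    simpa using hφ.differentiable_iteratedDeriv 1 (by norm_num)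
  have hφ2 : ∀ t, HasDerivAt (deriv φ) (iteratedDeriv 2 φ t) t := fun t => by
    rw [iteratedDeriv_succ, iteratedDeriv_one]
    exact (hφ' t).hasDerivAt
  have hslope : ∀ t ∈ Icc 0 T, deriv φ t ≤ deriv φ 0 - b + b / (1 - b * t) := by
    refine image_le_of_hasDerivAt_le_hasDerivAt (fun t _ => hφ2 t) (fun t ht => ?_)
      (by simp) (fun t ht => hbound t (Ico_subset_Icc_self ht))
    exact (((hasDerivAt_const t b).div (hline t) (hgap t ht)).const_add _).congr_deriv
      (by ring)
  refine image_le_of_hasDerivAt_le_hasDerivAt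
    (B := fun t => φ 0 + t * (deriv φ 0 - b) - log (1 - b * t))
    (fun t _ => hφ1 t) (fun t ht => ?_) (by simp) (fun t ht => hslope t (Ico_subset_Icc_self ht))
    ⟨hT, le_rfl⟩ |>.trans_eq (by ring)
  exact ((((hasDerivAt_id t).mul_const _).const_add _).sub ((hline t).log (hgap t ht))).congr_deriv
    (by field_simp; ring)

theorem le_sub_sq_div_of_selfConcordant {φ : ℝ → ℝ} (hφ : ContDiff ℝ 3 φ)
    (hpos : ∀ t, 0 < iteratedDeriv 2 φ t)
    (hsc : ∀ t, |iteratedDeriv 3 φ t| ≤ 2 * iteratedDeriv 2 φ t ^ ((3 : ℝ) / 2))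
    {lam : ℝ} (hlam : 0 ≤ lam) (hd1 : deriv φ 0 = -lam ^ 2)
    (hd2 : iteratedDeriv 2 φ 0 ≤ lam ^ 2) :
    φ (1 / (1 + lam)) ≤ φ 0 - lam ^ 2 / (2 * (1 + lam)) := by
  set T := 1 / (1 + lam)
  set b := √(iteratedDeriv 2 φ 0)
  have hT : 0 < T := by positivity
  have hlamT : lam * T < 1 := by
    rw [mul_one_div, div_lt_one (by linarith)]; linarith
  have hbT : b * T ≤ lam * T :=
    mul_le_mul_of_nonneg_right ((sqrt_le_sqrt hd2).trans_eq (sqrt_sq hlam)) hT.le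
  have hbound : ∀ t ∈ Icc 0 T, iteratedDeriv 2 φ t ≤ b ^ 2 / (1 - b * t) ^ 2 := by
    intro t ht
    rw [sq_sqrt (hpos 0).le]
    refine le_div_one_sub_mul_sq_of_selfConcordant
      (hφ.differentiable_iteratedDeriv 2 (by norm_num)) hpos (fun s => ?_) ht.1
      ((mul_le_mul_of_nonneg_left ht.2 (sqrt_nonneg _)).trans_lt (hbT.trans_lt hlamT))
    rw [← iteratedDeriv_succ]
    exact (le_abs_self _).trans (hsc s)
  have hstep := le_add_mul_deriv_sub_log_of_iteratedDeriv_two_le (b := b)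
    (hφ.of_le (by norm_num)) (sqrt_nonneg _) hT.le (hbT.trans_lt hlamT) hbound
  rw [hd1] at hstep
  have hω := neg_sub_log_one_sub_le (by positivity) hbT hlamT
  have hlog : log (1 - lam * T) = -log (1 + lam) := by
    rw [← log_inv]; congr 1; simp only [T]; field_simp; ring
  have hsum : lam ^ 2 * T + lam * T = lam := by simp only [T]; field_simp; ring
  linarith [log_one_add_le hlam]

namespace Matrix

variable {ι : Type*} [Fintype ι] [DecidableEq ι] {u : ι → ι → ℝ}

theorem transpose_mul_self_of_orthonormal (hu : ∀ i j, u i ⬝ᵥ u j = if i = j then 1 else 0) :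
    (of u)ᵀ * of u = 1 :=
  mul_eq_one_comm.mp <| by
    ext i j
    simpa [mul_apply, one_apply, dotProduct] using hu i j

theorem eq_transpose_mul_diagonal_mul_of_orthonormal
    (hu : ∀ i j, u i ⬝ᵥ u j = if i = j then 1 else 0) {M : Matrix ι ι ℝ} {ν : ι → ℝ}
    (hM : ∀ i, M *ᵥ u i = ν i • u i) : M = (of u)ᵀ * diagonal ν * of u := by
  have hMP : M * (of u)ᵀ = (of u)ᵀ * diagonal ν := by
    ext j i
    simp only [mul_apply, transpose_apply, of_apply, diagonal_apply, mul_ite, mul_zero,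
      Finset.sum_ite_eq', Finset.mem_univ, if_true]
    simpa [mulVec, dotProduct, mul_comm] using congrFun (hM i) j
  rw [← hMP, Matrix.mul_assoc, transpose_mul_self_of_orthonormal hu, Matrix.mul_one]

theorem dotProduct_transpose_mul_diagonal_mul_mulVec (P : Matrix ι ι ℝ) (ν z : ι → ℝ) :
    z ⬝ᵥ ((Pᵀ * diagonal ν * P) *ᵥ z) = ∑ i, ν i * (P *ᵥ z) i ^ 2 := by
  rw [Matrix.mul_assoc, ← mulVec_mulVec, dotProduct_mulVec, vecMul_transpose, ← mulVec_mulVec]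
  simp only [dotProduct, mulVec_diagonal]
  exact Finset.sum_congr rfl fun i _ => by ring

theorem posDef_of_orthonormal_eigenvectors (hu : ∀ i j, u i ⬝ᵥ u j = if i = j then 1 else 0)
    {M : Matrix ι ι ℝ} {ν : ι → ℝ} (hM : ∀ i, M *ᵥ u i = ν i • u i) (hν : ∀ i, 0 < ν i) :
    M.PosDef := by
  have hinj : Function.Injective (of u).mulVec := fun z w h => by
    simpa [mulVec_mulVec, transpose_mul_self_of_orthonormal hu] using
      congrArg ((of u)ᵀ *ᵥ ·) h
  rw [eq_transpose_mul_diagonal_mul_of_orthonormal hu hM, ← conjTranspose_eq_transpose_of_trivial]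
  exact (PosDef.diagonal hν).conjTranspose_mul_mul_same hinj

theorem dotProduct_mulVec_le_of_orthonormal_eigenvectors
    (hu : ∀ i j, u i ⬝ᵥ u j = if i = j then 1 else 0) {A B : Matrix ι ι ℝ} {σ μ : ι → ℝ}
    (hA : ∀ i, A *ᵥ u i = σ i • u i) (hB : ∀ i, B *ᵥ u i = μ i • u i) (hσμ : ∀ i, σ i ≤ μ i)
    (z : ι → ℝ) : z ⬝ᵥ (A *ᵥ z) ≤ z ⬝ᵥ (B *ᵥ z) := by
  rw [eq_transpose_mul_diagonal_mul_of_orthonormal hu hA,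
    eq_transpose_mul_diagonal_mul_of_orthonormal hu hB,
    dotProduct_transpose_mul_diagonal_mul_mulVec, dotProduct_transpose_mul_diagonal_mul_mulVec]
  exact Finset.sum_le_sum fun i _ => mul_le_mul_of_nonneg_right (hσμ i) (sq_nonneg _)

end Matrix

theorem iteratedDeriv_comp_add_smul {E : Type*} [AddCommGroup E] [Module ℝ E] (f : E → ℝ)
    (x u : E) (k : ℕ) (t : ℝ) :
    iteratedDeriv k (fun s : ℝ => f (x + s • u)) t =
      iteratedDeriv k (fun s : ℝ => f (x + t • u + s • u)) 0 := by
  have hshift : (fun s : ℝ => f (x + s • u)) = fun s => f (x + t • u + (s + -t) • u) := by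
    ext s; congr 1; module
  rw [hshift]
  exact (congrFun (iteratedDeriv_comp_add_const k (fun s => f (x + t • u + s • u)) (-t)) t).trans
    (by rw [add_neg_cancel])

theorem stmt9_general {n N : ℕ} (hNn : N < n)
    (f : (Fin n → ℝ) → ℝ) (grad : (Fin n → ℝ) → Fin n → ℝ)
    (hess : (Fin n → ℝ) → Matrix (Fin n) (Fin n) ℝ)
    (hf : ContDiff ℝ 3 f)
    (hgrad : ∀ x u : Fin n → ℝ, deriv (fun t : ℝ => f (x + t • u)) 0 = grad x ⬝ᵥ u)
    (hhessq : ∀ x u : Fin n → ℝ,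
      iteratedDeriv 2 (fun t : ℝ => f (x + t • u)) 0 = u ⬝ᵥ (hess x *ᵥ u))
    (hhpd : ∀ x, (hess x).PosDef)
    (hsc : ∀ x u : Fin n → ℝ, ∀ t : ℝ,
      |iteratedDeriv 3 (fun s : ℝ => f (x + s • u)) t|
        ≤ 2 * iteratedDeriv 2 (fun s : ℝ => f (x + s • u)) t ^ ((3 : ℝ) / 2))
    (x : Fin n → ℝ) (hgx : grad x ≠ 0)
    (σ : Fin n → ℝ) (u : Fin n → Fin n → ℝ)
    (hσpos : ∀ i, 0 < σ i)
    (hσmono : ∀ i j : Fin n, i ≤ j → σ j ≤ σ i)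
    (hortho : ∀ i j : Fin n, u i ⬝ᵥ u j = if i = j then (1 : ℝ) else 0)
    (heig : ∀ i, hess x *ᵥ u i = σ i • u i)
    (Q : Matrix (Fin n) (Fin n) ℝ)
    (hQeig : ∀ i : Fin n, Q *ᵥ u i = (if (i : ℕ) < N then σ i else σ ⟨N, hNn⟩) • u i)
    (lambar : ℝ) (hlambar : lambar = Real.sqrt (grad x ⬝ᵥ (Q⁻¹ *ᵥ grad x))) :
    f (x + (1 / (1 + lambar)) • -(Q⁻¹ *ᵥ grad x)) ≤ f x - lambar ^ 2 / (2 * (1 + lambar)) ∧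
    ∀ α : ℝ, 0 < α → α ≤ 1 / 2 →
      f (x + (1 / (1 + lambar)) • -(Q⁻¹ *ᵥ grad x))
        ≤ f x + α * (1 / (1 + lambar)) * (grad x ⬝ᵥ -(Q⁻¹ *ᵥ grad x)) := by
  have hσμ (i : Fin n) : σ i ≤ if (i : ℕ) < N then σ i else σ ⟨N, hNn⟩ := by
    split_ifs with hi
    exacts [le_rfl, hσmono _ _ (Fin.le_iff_val_le_val.mpr (not_lt.mp hi))]
  have hQ : Q.PosDef := posDef_of_orthonormal_eigenvectors hortho hQeig fun i => by
    split_ifs <;> exact hσpos _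
  set d := -(Q⁻¹ *ᵥ grad x)
  have hlam2 : 0 < grad x ⬝ᵥ (Q⁻¹ *ᵥ grad x) := by
    simpa using hQ.inv.dotProduct_mulVec_pos hgx
  have hlam : 0 < lambar := hlambar ▸ sqrt_pos.mpr hlam2
  have hgd : grad x ⬝ᵥ d = -lambar ^ 2 := by
    rw [dotProduct_neg, hlambar, sq_sqrt hlam2.le]
  have hQd : Q *ᵥ d = -grad x := by
    rw [mulVec_neg, mulVec_mulVec, mul_nonsing_inv _ (Q.isUnit_iff_isUnit_det.mp hQ.isUnit),
      one_mulVec]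
  have hdQd : d ⬝ᵥ (Q *ᵥ d) = lambar ^ 2 := by
    rw [hQd, dotProduct_neg, dotProduct_comm, hgd, neg_neg]
  have hd : d ≠ 0 := fun h => by
    rw [h, dotProduct_zero] at hgd
    nlinarith
  have hdecrease := le_sub_sq_div_of_selfConcordant (φ := fun t => f (x + t • d))
    (hf.comp (contDiff_const.add (contDiff_id.smul contDiff_const)))
    (fun t => by
      rw [iteratedDeriv_comp_add_smul, hhessq]
      simpa using (hhpd _).dotProduct_mulVec_pos hd)
    (hsc x d) hlam.le (by rw [hgrad, hgd])
    (by
      rw [hhessq, ← hdQd]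
      exact dotProduct_mulVec_le_of_orthonormal_eigenvectors hortho heig hQeig hσμ d)
  simp only [zero_smul, add_zero] at hdecrease
  refine ⟨hdecrease, fun α _ hα => hdecrease.trans ?_⟩
  rw [hgd]
  field_simp
  nlinarith

/-- Let `f` be a strictly convex standard self-concordant
function on `ℝⁿ` and `x` a point with `∇f(x) ≠ 0`.  Let `Q` be the truncated
approximation of `A := ∇²f(x)` with parameter `N`,
`λ̄ := (∇f(x)ᵀ Q⁻¹ ∇f(x))^{1/2}`, `d̂ := −Q⁻¹ ∇f(x)`, `t* := 1/(1 + λ̄)`.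
Then `f(x + t* d̂) ≤ f(x) − λ̄²/(2(1 + λ̄))`; in particular for any
`α ∈ (0, 1/2]` the Armijo condition `f(x + t* d̂) ≤ f(x) + α t* ∇f(x)ᵀ d̂`
holds. -/
theorem stmt9 {n N : ℕ} (hN : 1 ≤ N) (hNn : N < n)
    (f : (Fin n → ℝ) → ℝ) (grad : (Fin n → ℝ) → Fin n → ℝ)
    (hess : (Fin n → ℝ) → Matrix (Fin n) (Fin n) ℝ)
    (hf : ContDiff ℝ 3 f)
    (hconv : StrictConvexOn ℝ Set.univ f)
    (hgrad : ∀ x u : Fin n → ℝ, deriv (fun t : ℝ => f (x + t • u)) 0 = grad x ⬝ᵥ u)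
    (hhessq : ∀ x u : Fin n → ℝ,
      iteratedDeriv 2 (fun t : ℝ => f (x + t • u)) 0 = u ⬝ᵥ (hess x *ᵥ u))
    (hhsymm : ∀ x, (hess x).IsSymm)
    (hhpd : ∀ x, (hess x).PosDef)
    (hsc : ∀ x u : Fin n → ℝ, ∀ t : ℝ,
      |iteratedDeriv 3 (fun s : ℝ => f (x + s • u)) t|
        ≤ 2 * iteratedDeriv 2 (fun s : ℝ => f (x + s • u)) t ^ ((3 : ℝ) / 2))
    (hclosed : ∀ c : ℝ, IsClosed {x | f x ≤ c})
    (hbdd : BddBelow (Set.range f))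
    (x : Fin n → ℝ) (hgx : grad x ≠ 0)
    (σ : Fin n → ℝ) (u : Fin n → Fin n → ℝ)
    (hσpos : ∀ i, 0 < σ i)
    (hσmono : ∀ i j : Fin n, i ≤ j → σ j ≤ σ i)
    (hortho : ∀ i j : Fin n, u i ⬝ᵥ u j = if i = j then (1 : ℝ) else 0)
    (heig : ∀ i, hess x *ᵥ u i = σ i • u i)
    (Q : Matrix (Fin n) (Fin n) ℝ) (hQsymm : Q.IsSymm)
    (hQeig : ∀ i : Fin n, Q *ᵥ u i = (if (i : ℕ) < N then σ i else σ ⟨N, hNn⟩) • u i)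
    (lambar : ℝ) (hlambar : lambar = Real.sqrt (grad x ⬝ᵥ (Q⁻¹ *ᵥ grad x))) :
    f (x + (1 / (1 + lambar)) • -(Q⁻¹ *ᵥ grad x)) ≤ f x - lambar ^ 2 / (2 * (1 + lambar)) ∧
    ∀ α : ℝ, 0 < α → α ≤ 1 / 2 →
      f (x + (1 / (1 + lambar)) • -(Q⁻¹ *ᵥ grad x))
        ≤ f x + α * (1 / (1 + lambar)) * (grad x ⬝ᵥ -(Q⁻¹ *ᵥ grad x)) :=
  stmt9_general hNn f grad hess hf hgrad hhessq hhpd hsc x hgx σ u hσpos hσmono hortho heig Q hQeig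
    lambar hlambar
end
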